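/- arXiv:1905.09069 — 2 statements merged into one kernel-verified Lean document; each statement's English description precedes it below -/
import Mathlib

section
/- Let ℳ denote the σ-ideal of meager subsets of ℝ, and let G ⊆ ℝ × ℝ be a Borel set whose complement belongs to the Fubini product ℳ ⊗ ℳ. Then there exist a set B ⊆ ℝ whose complement is meager and a perfect set P ⊆ ℝ such that B × P ⊆ G. -/
open Set

/-- A set belongs to the Fubini product `ℳ ⊗ ℳ` of the meager ideal with itself iff it is
covered by a Borel set almost all of whose vertical sections are meager. -/
def MemMeagerFubiniProd (A : Set (ℝ × ℝ)) : Prop :=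
  ∃ B : Set (ℝ × ℝ), MeasurableSet B ∧ A ⊆ B ∧
    IsMeagre {x : ℝ | ¬ IsMeagre {y : ℝ | (x, y) ∈ B}}

section EgglestonAux

open Topology Filter


lemma open_meagre_empty {s : Set ℝ} (ho : IsOpen s) (hm : IsMeagre s) : s = ∅ := by
  rcases s.eq_empty_or_nonempty with h | h
  · exact h
  · exfalso
    have hd : Dense sᶜ := dense_of_mem_residual hm
    obtain ⟨x, hx1, hx2⟩ := hd.inter_open_nonempty s ho h
    exact hx2 hx1

lemma nwd_closed_sections {F : Set (ℝ × ℝ)} (hF : IsClosed F) (hFi : interior F = ∅) :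
    IsMeagre {x : ℝ | ¬ IsMeagre {y : ℝ | (x, y) ∈ F}} := by
  set T : ℚ × ℚ → Set ℝ := fun pq =>
    {x : ℝ | (pq.1 : ℝ) < (pq.2 : ℝ) ∧ ∀ y ∈ Ioo (pq.1 : ℝ) (pq.2 : ℝ), (x, y) ∈ F} with hT
  have hTclosed : ∀ pq, IsClosed (T pq) := by
    intro pq
    by_cases h : (pq.1 : ℝ) < (pq.2 : ℝ)
    · have : T pq = ⋂ y ∈ Ioo (pq.1 : ℝ) (pq.2 : ℝ), {x : ℝ | (x, y) ∈ F} := by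
        ext x
        simp only [hT, mem_setOf_eq, mem_iInter]
        exact ⟨fun hx => hx.2, fun hx => ⟨h, hx⟩⟩
      rw [this]
      exact isClosed_biInter fun y _ => hF.preimage (Continuous.prodMk continuous_id continuous_const)
    · have : T pq = ∅ := by
        ext x; simp only [hT, mem_setOf_eq, mem_empty_iff_false, iff_false]
        exact fun hx => h hx.1
      rw [this]; exact isClosed_empty
  have hTnwd : ∀ pq, IsMeagre (T pq) := by
    intro pq
    have hint : interior (T pq) = ∅ := by
      by_contra hne
      obtain ⟨x, hx⟩ := nonempty_iff_ne_empty.mpr hne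
      have hlt : (pq.1 : ℝ) < (pq.2 : ℝ) := (interior_subset hx).1
      have hsub : interior (T pq) ×ˢ Ioo (pq.1 : ℝ) (pq.2 : ℝ) ⊆ F := by
        rintro ⟨a, b⟩ ⟨ha, hb⟩
        exact (interior_subset ha).2 b hb
      have : interior (T pq) ×ˢ Ioo (pq.1 : ℝ) (pq.2 : ℝ) ⊆ interior F :=
        (isOpen_interior.prod isOpen_Ioo).subset_interior_iff.mpr hsub
      obtain ⟨y, hy⟩ : (Ioo (pq.1 : ℝ) (pq.2 : ℝ)).Nonempty := nonempty_Ioo.mpr hlt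
      have := this (Set.mk_mem_prod hx hy)
      rw [hFi] at this
      exact this
    -- T pq closed with empty interior: complement open dense, so T pq meagre
    have h2 := isClosed_isNowhereDense_iff_compl.mp
      ⟨hTclosed pq, (hTclosed pq).isNowhereDense_iff.mpr hint⟩
    rw [IsMeagre]
    exact residual_of_dense_open h2.1 h2.2
  have hcover : {x : ℝ | ¬ IsMeagre {y : ℝ | (x, y) ∈ F}} ⊆ ⋃ pq : ℚ × ℚ, T pq := by
    intro x hx
    have hxc : IsClosed {y : ℝ | (x, y) ∈ F} :=
      hF.preimage (Continuous.prodMk continuous_const continuous_id)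
    have hnint : interior {y : ℝ | (x, y) ∈ F} ≠ ∅ := by
      intro h
      apply hx
      have h2 := isClosed_isNowhereDense_iff_compl.mp ⟨hxc, hxc.isNowhereDense_iff.mpr h⟩
      rw [IsMeagre]
      exact residual_of_dense_open h2.1 h2.2
    obtain ⟨y, hy⟩ := nonempty_iff_ne_empty.mpr hnint
    obtain ⟨ε, hε, hball⟩ := Metric.isOpen_iff.mp isOpen_interior y hy
    rw [Real.ball_eq_Ioo] at hball
    obtain ⟨p, hp1, hp2⟩ := exists_rat_btwn (show y - ε < y by linarith)
    obtain ⟨q, hq1, hq2⟩ := exists_rat_btwn (show y < y + ε by linarith)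
    refine mem_iUnion.mpr ⟨(p, q), hp2.trans hq1, fun z hz => ?_⟩
    have : z ∈ interior {y : ℝ | (x, y) ∈ F} := hball ⟨hp1.trans hz.1, hz.2.trans hq2⟩
    exact (interior_subset (s := {y : ℝ | (x, y) ∈ F})) this
  have hmeag : IsMeagre (⋃ pq : ℚ × ℚ, T pq) := by
    rw [IsMeagre, compl_iUnion]
    exact (countable_iInter_mem).mpr hTnwd
  exact hmeag.mono hcover

-- need: isMeagre over countable index; check
example {ι : Type} [Countable ι] {s : ι → Set ℝ} (h : ∀ i, IsMeagre (s i)) :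
    IsMeagre (⋃ i, s i) := by
  rw [IsMeagre, compl_iUnion]
  exact (countable_iInter_mem).mpr h

lemma IsMeagre.union' {X : Type*} [TopologicalSpace X] {s t : Set X}
    (hs : IsMeagre s) (ht : IsMeagre t) : IsMeagre (s ∪ t) := by
  rw [IsMeagre, compl_union]
  exact Filter.inter_mem hs ht

lemma meagre_plane_sections {M : Set (ℝ × ℝ)} (hM : IsMeagre M) :
    IsMeagre {x : ℝ | ¬ IsMeagre {y : ℝ | (x, y) ∈ M}} := by
  obtain ⟨S, hSnwd, hScount, hScover⟩ := isMeagre_iff_countable_union_isNowhereDense.mp hM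
  have hne : (insert (∅ : Set (ℝ × ℝ)) S).Nonempty := ⟨∅, mem_insert _ _⟩
  obtain ⟨f, hf⟩ := (hScount.insert ∅).exists_eq_range hne
  have hfnwd : ∀ n, IsNowhereDense (f n) := by
    intro n
    have : f n ∈ insert (∅ : Set (ℝ × ℝ)) S := hf ▸ mem_range_self n
    rcases this with h | h
    · rw [h]; exact isNowhereDense_empty
    · exact hSnwd _ h
  set F : ℕ → Set (ℝ × ℝ) := fun n => closure (f n) with hF
  have hFclosed : ∀ n, IsClosed (F n) := fun n => isClosed_closure
  have hFint : ∀ n, interior (F n) = ∅ := by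
    intro n
    have := (hfnwd n).closure
    rwa [IsNowhereDense, closure_closure] at this
  have hMcover : M ⊆ ⋃ n, F n := by
    refine hScover.trans ?_
    intro z hz
    obtain ⟨t, htS, hzt⟩ := hz
    have : t ∈ insert (∅ : Set (ℝ × ℝ)) S := mem_insert_of_mem _ htS
    rw [hf] at this
    obtain ⟨n, rfl⟩ := this
    exact mem_iUnion.mpr ⟨n, subset_closure hzt⟩
  have hbad : ∀ n, IsMeagre {x : ℝ | ¬ IsMeagre {y : ℝ | (x, y) ∈ F n}} :=
    fun n => nwd_closed_sections (hFclosed n) (hFint n)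
  have hcover : {x : ℝ | ¬ IsMeagre {y : ℝ | (x, y) ∈ M}} ⊆
      ⋃ n, {x : ℝ | ¬ IsMeagre {y : ℝ | (x, y) ∈ F n}} := by
    intro x hx
    by_contra hxn
    apply hx
    simp only [mem_iUnion, mem_setOf_eq, not_exists, not_not] at hxn
    have : {y : ℝ | (x, y) ∈ M} ⊆ ⋃ n, {y : ℝ | (x, y) ∈ F n} := by
      intro y hy
      obtain ⟨n, hn⟩ := mem_iUnion.mp (show (x, y) ∈ ⋃ n, F n from hMcover hy)
      exact mem_iUnion.mpr ⟨n, hn⟩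
    exact (isMeagre_iUnion hxn).mono this
  exact ((isMeagre_iUnion hbad).mono hcover)

lemma ku_meagre {A : Set (ℝ × ℝ)} (hA : BaireMeasurableSet A)
    (h : IsMeagre {x : ℝ | ¬ IsMeagre {y : ℝ | (x, y) ∈ A}}) : IsMeagre A := by
  obtain ⟨U, hUopen, hAU⟩ := hA.residualEq_isOpen
  set M : Set (ℝ × ℝ) := {z | ¬ (z ∈ A ↔ z ∈ U)} with hMdef
  have hMmeagre : IsMeagre M := by
    rw [IsMeagre]
    have : Mᶜ = {z : ℝ × ℝ | (z ∈ A) = (z ∈ U)} := by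
      ext z
      simp only [hMdef, mem_compl_iff, mem_setOf_eq, not_not, eq_iff_iff]
    rw [this]
    exact hAU
  have hMsec := meagre_plane_sections hMmeagre
  set Bad : Set ℝ := {x : ℝ | ¬ IsMeagre {y : ℝ | (x, y) ∈ A}} ∪
      {x : ℝ | ¬ IsMeagre {y : ℝ | (x, y) ∈ M}} with hBad
  have hBadMeagre : IsMeagre Bad := h.union' hMsec
  set V : Set ℝ := Prod.fst '' U with hV
  have hVopen : IsOpen V := isOpenMap_fst U hUopen
  have hVsub : V ⊆ Bad := by
    rintro x ⟨⟨x', y⟩, hzU, rfl⟩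
    by_contra hxBad
    rw [hBad, mem_union] at hxBad
    push_neg at hxBad
    simp only [mem_setOf_eq, not_not] at hxBad
    have hUx : {y : ℝ | (x', y) ∈ U} ⊆ {y : ℝ | (x', y) ∈ A} ∪ {y : ℝ | (x', y) ∈ M} := by
      intro y' hy'
      by_cases hyA : (x', y') ∈ A
      · exact Or.inl hyA
      · exact Or.inr (fun hiff => hyA (hiff.mpr hy'))
    have hUxMeagre : IsMeagre {y : ℝ | (x', y) ∈ U} :=
      (hxBad.1.union' hxBad.2).mono hUx
    have hUxOpen : IsOpen {y : ℝ | (x', y) ∈ U} :=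
      hUopen.preimage (Continuous.prodMk continuous_const continuous_id)
    have := open_meagre_empty hUxOpen hUxMeagre
    exact absurd (show y ∈ {y : ℝ | (x', y) ∈ U} from hzU) (by rw [this]; exact notMem_empty y)
  have hVempty : V = ∅ := open_meagre_empty hVopen (hBadMeagre.mono hVsub)
  have hUempty : U = ∅ := by
    ext z
    simp only [mem_empty_iff_false, iff_false]
    intro hz
    have : z.1 ∈ V := ⟨z, hz, rfl⟩
    rw [hVempty] at this
    exact this
  have hAM : A ⊆ M := by
    intro a ha
    simp only [hMdef, mem_setOf_eq]
    intro hiff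
    rw [hUempty] at hiff
    exact (hiff.mp ha)
  exact hMmeagre.mono hAM


/-- Rational intervals enumeration. -/
noncomputable def ratIoo (m : ℕ) : ℝ × ℝ :=
  if ((Denumerable.ofNat (ℚ × ℚ) m).1 : ℝ) < ((Denumerable.ofNat (ℚ × ℚ) m).2 : ℝ)
  then (((Denumerable.ofNat (ℚ × ℚ) m).1 : ℝ), ((Denumerable.ofNat (ℚ × ℚ) m).2 : ℝ))
  else (0, 1)

lemma ratIoo_lt (m : ℕ) : (ratIoo m).1 < (ratIoo m).2 := by
  unfold ratIoo
  split
  · next h => exact h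
  · norm_num

lemma exists_ratIoo {U : Set ℝ} (hU : IsOpen U) (hne : U.Nonempty) :
    ∃ m, Ioo (ratIoo m).1 (ratIoo m).2 ⊆ U := by
  obtain ⟨x, hx⟩ := hne
  obtain ⟨ε, hε, hball⟩ := Metric.isOpen_iff.mp hU x hx
  rw [Real.ball_eq_Ioo] at hball
  obtain ⟨p, hp1, hp2⟩ := exists_rat_btwn (show x - ε < x by linarith)
  obtain ⟨q, hq1, hq2⟩ := exists_rat_btwn (show x < x + ε by linarith)
  refine ⟨(Denumerable.eqv (ℚ × ℚ)) (p, q), ?_⟩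
  have hof : Denumerable.ofNat (ℚ × ℚ) ((Denumerable.eqv (ℚ × ℚ)) (p, q)) = (p, q) :=
    (Denumerable.eqv (ℚ × ℚ)).symm_apply_apply (p, q)
  have : ratIoo ((Denumerable.eqv (ℚ × ℚ)) (p, q)) = ((p : ℝ), (q : ℝ)) := by
    unfold ratIoo
    rw [hof]
    exact if_pos (hp2.trans hq1)
  rw [this]
  exact fun z hz => hball ⟨hp1.trans hz.1, hz.2.trans hq2⟩

/-- Core shrink lemma. -/
lemma core_shrink {D : Set (ℝ × ℝ)} (hDo : IsOpen D) (hDd : Dense D)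
    {c d a b δ : ℝ} (hcd : c < d) (hab : a < b) (hδ : 0 < δ) :
    ∃ c' d' a' b', c < c' ∧ c' < d' ∧ d' < d ∧ a ≤ a' ∧ a' < b' ∧ b' ≤ b ∧
      b' - a' ≤ δ ∧ Ioo c' d' ×ˢ Icc a' b' ⊆ D := by
  have hopen : IsOpen (Ioo c d ×ˢ Ioo a b) := isOpen_Ioo.prod isOpen_Ioo
  have hnonempty : (Ioo c d ×ˢ Ioo a b).Nonempty :=
    (nonempty_Ioo.mpr hcd).prod (nonempty_Ioo.mpr hab)
  obtain ⟨⟨x, y⟩, hz, hzD⟩ := hDd.inter_open_nonempty _ hopen hnonempty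
  obtain ⟨ε, hε, hball⟩ := Metric.isOpen_iff.mp hDo (x, y) hzD
  obtain ⟨hx, hy⟩ := hz
  set r : ℝ := min (min (ε / 2) (δ / 2)) (min (min (y - a) (b - y)) (min (x - c) (d - x))) with hr
  have hrpos : 0 < r := by
    have := hx.1; have := hx.2; have := hy.1; have := hy.2
    refine lt_min (lt_min (by linarith) (by linarith)) (lt_min (lt_min ?_ ?_) (lt_min ?_ ?_)) <;> linarith
  refine ⟨x - r / 2, x + r / 2, y - r / 2, y + r / 2, ?_, by linarith, ?_, ?_, by linarith, ?_, ?_, ?_⟩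
  · have : r ≤ x - c := (min_le_right _ _).trans ((min_le_right _ _).trans (min_le_left _ _))
    linarith
  · have : r ≤ d - x := (min_le_right _ _).trans ((min_le_right _ _).trans (min_le_right _ _))
    linarith
  · have : r ≤ y - a := (min_le_right _ _).trans ((min_le_left _ _).trans (min_le_left _ _))
    linarith
  · have : r ≤ b - y := (min_le_right _ _).trans ((min_le_left _ _).trans (min_le_right _ _))
    linarith
  · have : r ≤ δ / 2 := (min_le_left _ _).trans (min_le_right _ _)
    linarith
  · rintro ⟨u, v⟩ ⟨hu, hv⟩
    apply hball
    have hrε : r ≤ ε / 2 := (min_le_left _ _).trans (min_le_left _ _)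
    simp only [Metric.mem_ball, Prod.dist_eq, max_lt_iff, Real.dist_eq]
    constructor
    · rw [abs_lt]
      obtain ⟨h1, h2⟩ := hu
      constructor <;> linarith
    · rw [abs_lt]
      obtain ⟨h1, h2⟩ := hv
      constructor <;> linarith

/-- Fold shrinking over a list of indices. -/
lemma fold_shrink {ι : Type*} [DecidableEq ι] {D : Set (ℝ × ℝ)} (hDo : IsOpen D) (hDd : Dense D)
    {δ : ℝ} (hδ : 0 < δ) (L : List ι) (g : ι → ℝ × ℝ) (hg : ∀ i, (g i).1 < (g i).2)
    {c d : ℝ} (hcd : c < d) :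
    ∃ (g' : ι → ℝ × ℝ) (c' d' : ℝ), c' < d' ∧ Ioo c' d' ⊆ Ioo c d ∧
      (∀ i, (g' i).1 < (g' i).2) ∧
      (∀ i, (g i).1 ≤ (g' i).1 ∧ (g' i).2 ≤ (g i).2) ∧
      (∀ i ∈ L, (g' i).2 - (g' i).1 ≤ δ ∧ Ioo c' d' ×ˢ Icc (g' i).1 (g' i).2 ⊆ D) := by
  induction L generalizing g c d with
  | nil =>
    exact ⟨g, c, d, hcd, subset_rfl, hg, fun i => ⟨le_refl _, le_refl _⟩, fun i hi => absurd hi List.not_mem_nil⟩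
  | cons i L ih =>
    obtain ⟨g₁, c₁, d₁, hcd₁, hsub₁, hg₁, hmono₁, hL₁⟩ := ih g hg hcd
    obtain ⟨c₂, d₂, a', b', h1, h2, h3, h4, h5, h6, h7, h8⟩ :=
      core_shrink hDo hDd hcd₁ (hg₁ i) hδ
    refine ⟨Function.update g₁ i (a', b'), c₂, d₂, h2, ?_, ?_, ?_, ?_⟩
    · exact (Ioo_subset_Ioo h1.le h3.le).trans hsub₁
    · intro j
      by_cases hj : j = i
      · subst hj; rw [Function.update_self]; exact h5
      · rw [Function.update_of_ne hj]; exact hg₁ j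
    · intro j
      by_cases hj : j = i
      · subst hj; rw [Function.update_self]
        exact ⟨(hmono₁ j).1.trans h4, h6.trans (hmono₁ j).2⟩
      · rw [Function.update_of_ne hj]; exact hmono₁ j
    · intro j hj
      by_cases hji : j = i
      · subst hji; rw [Function.update_self]
        exact ⟨h7, h8⟩
      · rw [Function.update_of_ne hji]
        have hjL : j ∈ L := by
          rcases List.mem_cons.mp hj with h | h
          · exact absurd h hji
          · exact h
        obtain ⟨hlen, hprod⟩ := hL₁ j hjL
        exact ⟨hlen, fun z hz => hprod ⟨(Ioo_subset_Ioo h1.le h3.le) hz.1, hz.2⟩⟩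

/-- The invariant for the family of intervals at a given stage. -/
def GoodFam (n : ℕ) (f : (Fin n → Bool) → ℝ × ℝ) : Prop :=
  (∀ s, (f s).1 < (f s).2) ∧ (∀ s, (f s).2 - (f s).1 ≤ (1 / 2) ^ n) ∧
  (∀ s t, s ≠ t → Icc (f s).1 (f s).2 ∩ Icc (f t).1 (f t).2 = ∅)

lemma step_exists (D : Set (ℝ × ℝ)) (hDo : IsOpen D) (hDd : Dense D)
    {cI dI : ℝ} (hI : cI < dI)
    {n : ℕ} {f : (Fin n → Bool) → ℝ × ℝ} (hf : GoodFam n f) :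
    ∃ (g : (Fin (n + 1) → Bool) → ℝ × ℝ) (c d : ℝ),
      GoodFam (n + 1) g ∧
      (∀ t, Icc (g t).1 (g t).2 ⊆ Icc (f (Fin.init t)).1 (f (Fin.init t)).2) ∧
      c < d ∧ Ioo c d ⊆ Ioo cI dI ∧
      (∀ t, Ioo c d ×ˢ Icc (g t).1 (g t).2 ⊆ D) := by
  obtain ⟨hflt, hflen, hfdisj⟩ := hf
  -- initial children
  set g₀ : (Fin (n + 1) → Bool) → ℝ × ℝ := fun t =>
    let a := (f (Fin.init t)).1
    let b := (f (Fin.init t)).2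
    if t (Fin.last n) then (b - (b - a) / 3, b) else (a, a + (b - a) / 3) with hg₀
  have hg₀lt : ∀ t, (g₀ t).1 < (g₀ t).2 := by
    intro t
    have := hflt (Fin.init t)
    simp only [hg₀]
    split <;> simp <;> linarith
  have hg₀sub : ∀ t, Icc (g₀ t).1 (g₀ t).2 ⊆ Icc (f (Fin.init t)).1 (f (Fin.init t)).2 := by
    intro t
    have := hflt (Fin.init t)
    simp only [hg₀]
    split <;> exact Icc_subset_Icc (by linarith) (by linarith)
  have hg₀disj : ∀ s t, s ≠ t → Icc (g₀ s).1 (g₀ s).2 ∩ Icc (g₀ t).1 (g₀ t).2 = ∅ := by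
    intro s t hst
    by_cases hinit : Fin.init s = Fin.init t
    · -- same parent, different last bit
      have hlast : s (Fin.last n) ≠ t (Fin.last n) := by
        intro h
        apply hst
        have hs := Fin.snoc_init_self s
        have ht := Fin.snoc_init_self t
        rw [← hs, ← ht, hinit, h]
      set a := (f (Fin.init t)).1 with ha
      set b := (f (Fin.init t)).2 with hb
      have hab : a < b := hflt (Fin.init t)
      have hs' : g₀ s = if s (Fin.last n) then (b - (b - a) / 3, b) else (a, a + (b - a) / 3) := by
        simp only [hg₀, hinit, ha, hb]
      have ht' : g₀ t = if t (Fin.last n) then (b - (b - a) / 3, b) else (a, a + (b - a) / 3) := by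
        simp only [hg₀, ha, hb]
      rcases Bool.eq_false_or_eq_true (s (Fin.last n)) with hsb | hsb <;>
        rcases Bool.eq_false_or_eq_true (t (Fin.last n)) with htb | htb
      · exact absurd (hsb.trans htb.symm) hlast
      · rw [hs', ht', hsb, htb]
        rw [if_pos rfl, if_neg Bool.false_ne_true]
        rw [eq_empty_iff_forall_notMem]
        rintro y ⟨⟨hy1, hy2⟩, ⟨hy3, hy4⟩⟩
        linarith
      · rw [hs', ht', hsb, htb]
        rw [if_pos rfl, if_neg Bool.false_ne_true]
        rw [eq_empty_iff_forall_notMem]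
        rintro y ⟨⟨hy1, hy2⟩, ⟨hy3, hy4⟩⟩
        linarith
      · exact absurd (hsb.trans htb.symm) hlast
    · -- different parents
      have hpar := hfdisj _ _ hinit
      rw [eq_empty_iff_forall_notMem]
      rintro y ⟨hy1, hy2⟩
      have : y ∈ Icc (f (Fin.init s)).1 (f (Fin.init s)).2 ∩
          Icc (f (Fin.init t)).1 (f (Fin.init t)).2 :=
        ⟨hg₀sub s hy1, hg₀sub t hy2⟩
      rw [hpar] at this
      exact this
  -- now shrink
  have hδ : (0 : ℝ) < (1 / 2) ^ (n + 1) := by positivity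
  obtain ⟨g', c', d', hcd', hsub', hlt', hmono', hL'⟩ :=
    fold_shrink hDo hDd hδ (Finset.univ : Finset (Fin (n + 1) → Bool)).toList g₀ hg₀lt hI
  have hmem : ∀ t : Fin (n + 1) → Bool, t ∈ (Finset.univ : Finset (Fin (n + 1) → Bool)).toList :=
    fun t => (Finset.mem_toList).mpr (Finset.mem_univ t)
  have hIccsub : ∀ t, Icc (g' t).1 (g' t).2 ⊆ Icc (g₀ t).1 (g₀ t).2 :=
    fun t => Icc_subset_Icc (hmono' t).1 (hmono' t).2
  refine ⟨g', c', d', ⟨hlt', fun t => (hL' t (hmem t)).1, ?_⟩, ?_, hcd', hsub', fun t => (hL' t (hmem t)).2⟩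
  · intro s t hst
    rw [eq_empty_iff_forall_notMem]
    rintro y ⟨hy1, hy2⟩
    have : y ∈ Icc (g₀ s).1 (g₀ s).2 ∩ Icc (g₀ t).1 (g₀ t).2 :=
      ⟨hIccsub s hy1, hIccsub t hy2⟩
    rw [hg₀disj s t hst] at this
    exact this
  · exact fun t => (hIccsub t).trans (hg₀sub t)

lemma fusion (D : ℕ → Set (ℝ × ℝ)) (hDo : ∀ k, IsOpen (D k)) (hDd : ∀ k, Dense (D k)) :
    ∃ (F : ∀ n, (Fin n → Bool) → ℝ × ℝ) (cd : ℕ → ℝ × ℝ),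
      (∀ n, GoodFam n (F n)) ∧
      (∀ n (t : Fin (n + 1) → Bool),
        Icc ((F (n + 1)) t).1 ((F (n + 1)) t).2 ⊆
          Icc (F n (Fin.init t)).1 (F n (Fin.init t)).2) ∧
      (∀ n, (cd n).1 < (cd n).2) ∧
      (∀ n, Ioo (cd n).1 (cd n).2 ⊆
        Ioo (ratIoo (Nat.unpair n).2).1 (ratIoo (Nat.unpair n).2).2) ∧
      (∀ n (t : Fin (n + 1) → Bool),
        Ioo (cd n).1 (cd n).2 ×ˢ Icc (F (n + 1) t).1 (F (n + 1) t).2 ⊆ D (Nat.unpair n).1) := by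
  have H : ∀ (n : ℕ) (f : {f : (Fin n → Bool) → ℝ × ℝ // GoodFam n f}),
      ∃ (g : {g : (Fin (n + 1) → Bool) → ℝ × ℝ // GoodFam (n + 1) g}) (cd : ℝ × ℝ),
        (∀ t, Icc (g.1 t).1 (g.1 t).2 ⊆ Icc (f.1 (Fin.init t)).1 (f.1 (Fin.init t)).2) ∧
        cd.1 < cd.2 ∧
        Ioo cd.1 cd.2 ⊆ Ioo (ratIoo (Nat.unpair n).2).1 (ratIoo (Nat.unpair n).2).2 ∧
        (∀ t, Ioo cd.1 cd.2 ×ˢ Icc (g.1 t).1 (g.1 t).2 ⊆ D (Nat.unpair n).1) := by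
    intro n f
    obtain ⟨g, c, d, hgood, hsub, hcd, hIoo, hprod⟩ :=
      step_exists (D (Nat.unpair n).1) (hDo _) (hDd _) (ratIoo_lt (Nat.unpair n).2) f.2
    exact ⟨⟨g, hgood⟩, (c, d), hsub, hcd, hIoo, hprod⟩
  choose step cdf h1 h2 h3 h4 using H
  have hF0 : GoodFam 0 (fun _ : Fin 0 → Bool => ((0 : ℝ), (1 : ℝ))) := by
    refine ⟨fun s => by norm_num, fun s => by norm_num, fun s t hst => ?_⟩
    exact absurd (Subsingleton.elim s t) hst
  set seq : ∀ n, {f : (Fin n → Bool) → ℝ × ℝ // GoodFam n f} :=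
    fun n => Nat.rec ⟨fun _ => ((0 : ℝ), (1 : ℝ)), hF0⟩ (fun n p => step n p) n with hseq
  refine ⟨fun n => (seq n).1, fun n => cdf n (seq n), fun n => (seq n).2, ?_, ?_, ?_, ?_⟩
  · intro n t
    exact h1 n (seq n) t
  · intro n
    exact h2 n (seq n)
  · intro n
    exact h3 n (seq n)
  · intro n t
    exact h4 n (seq n) t

lemma residual_seq {X : Type*} [TopologicalSpace X] {s : Set X} (hs : s ∈ residual X) :
    ∃ D : ℕ → Set X, (∀ n, IsOpen (D n)) ∧ (∀ n, Dense (D n)) ∧ (⋂ n, D n) ⊆ s := by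
  rw [mem_residual_iff] at hs
  obtain ⟨S, ho, hd, hc, hsub⟩ := hs
  obtain ⟨f, hf⟩ := (hc.insert univ).exists_eq_range ⟨univ, mem_insert _ _⟩
  have hmem : ∀ n, f n ∈ insert univ S := fun n => hf ▸ mem_range_self n
  refine ⟨f, ?_, ?_, ?_⟩
  · intro n
    rcases hmem n with h | h
    · rw [h]; exact isOpen_univ
    · exact ho _ h
  · intro n
    rcases hmem n with h | h
    · rw [h]; exact dense_univ
    · exact hd _ h
  · refine subset_trans ?_ hsub
    intro x hx t ht
    have : t ∈ insert univ S := mem_insert_of_mem _ ht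
    rw [hf] at this
    obtain ⟨n, rfl⟩ := this
    exact mem_iInter.mp hx n

theorem eggleston_category' (G : Set (ℝ × ℝ)) (hG : MeasurableSet G)
    (hGc : ∃ B : Set (ℝ × ℝ), MeasurableSet B ∧ Gᶜ ⊆ B ∧
      IsMeagre {x : ℝ | ¬ IsMeagre {y : ℝ | (x, y) ∈ B}}) :
    ∃ B P : Set ℝ, IsMeagre Bᶜ ∧ P.Nonempty ∧ Perfect P ∧ B ×ˢ P ⊆ G := by
  classical
  obtain ⟨C, hCmeas, hsubC, hCsec⟩ := hGc
  -- G is residual in the plane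
  have hCmeagre : IsMeagre C := ku_meagre hCmeas.baireMeasurableSet hCsec
  have hGres : G ∈ residual (ℝ × ℝ) := by
    have : IsMeagre Gᶜ := hCmeagre.mono hsubC
    rw [IsMeagre, compl_compl] at this
    exact this
  obtain ⟨D, hDo, hDd, hDsub⟩ := residual_seq hGres
  obtain ⟨F, cd, hgood, hnest, hcdlt, hcdsub, hprod⟩ := fusion D hDo hDd
  -- the compact sets K n and the perfect set P
  set K : ℕ → Set ℝ := fun n => ⋃ s : Fin n → Bool, Icc (F n s).1 (F n s).2 with hK
  have hKcompact : ∀ n, IsCompact (K n) := fun n => isCompact_iUnion fun s => isCompact_Icc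
  have hKclosed : ∀ n, IsClosed (K n) :=
    fun n => isClosed_iUnion_of_finite fun s => isClosed_Icc
  have hKne : ∀ n, (K n).Nonempty := by
    intro n
    refine ⟨(F n (fun _ => false)).1, mem_iUnion.mpr ⟨fun _ => false, ?_⟩⟩
    exact ⟨le_refl _, ((hgood n).1 _).le⟩
  have hKmono : ∀ n, K (n + 1) ⊆ K n := by
    intro n y hy
    obtain ⟨t, ht⟩ := mem_iUnion.mp hy
    exact mem_iUnion.mpr ⟨Fin.init t, hnest n t ht⟩
  have hKanti : Antitone K := antitone_nat_of_succ_le hKmono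
  set P : Set ℝ := ⋂ n, K n with hP
  -- every interval of the scheme contains a point of P
  have hbranch : ∀ (n : ℕ) (s : Fin n → Bool),
      (P ∩ Icc (F n s).1 (F n s).2).Nonempty := by
    intro n₀ s₀
    set E : ∀ m, Fin (n₀ + m) → Bool :=
      fun m => Nat.rec s₀ (fun m e => Fin.snoc e false) m with hE
    set Cs : ℕ → Set ℝ := fun m => Icc (F (n₀ + m) (E m)).1 (F (n₀ + m) (E m)).2 with hCs
    have hCmono : ∀ m, Cs (m + 1) ⊆ Cs m := by
      intro m
      have h := hnest (n₀ + m) (E (m + 1))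
      have heq : E (m + 1) = Fin.snoc (E m) false := rfl
      have hinit : Fin.init (E (m + 1)) = E m := by rw [heq, Fin.init_snoc]
      rwa [hinit] at h
    have hCne : ∀ m, (Cs m).Nonempty :=
      fun m => nonempty_Icc.mpr ((hgood _).1 _).le
    obtain ⟨y, hy⟩ := IsCompact.nonempty_iInter_of_sequence_nonempty_isCompact_isClosed
      Cs hCmono hCne isCompact_Icc (fun m => isClosed_Icc)
    have hyP : y ∈ P := by
      refine mem_iInter.mpr fun n => ?_
      rcases le_or_gt n₀ n with h | h
      · obtain ⟨m, rfl⟩ := Nat.exists_eq_add_of_le h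
        exact mem_iUnion.mpr ⟨E m, mem_iInter.mp hy m⟩
      · have hy0 : y ∈ Cs 0 := mem_iInter.mp hy 0
        have : y ∈ K n₀ := mem_iUnion.mpr ⟨E 0, hy0⟩
        exact hKanti h.le this
    exact ⟨y, hyP, mem_iInter.mp hy 0⟩
  have hPne : P.Nonempty := by
    obtain ⟨y, hy, _⟩ := hbranch 0 (fun _ => false)
    exact ⟨y, hy⟩
  -- P is perfect
  have hPperfect : Perfect P := by
    constructor
    · exact isClosed_iInter fun n => hKclosed n
    · rw [preperfect_iff_nhds]
      intro x hx U hU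
      obtain ⟨ε, hε, hball⟩ := Metric.mem_nhds_iff.mp hU
      obtain ⟨n, hn⟩ := exists_pow_lt_of_lt_one hε (show (1 : ℝ) / 2 < 1 by norm_num)
      obtain ⟨s, hs⟩ := mem_iUnion.mp (mem_iInter.mp hx n)
      -- two children
      obtain ⟨y₀, hy₀P, hy₀⟩ := hbranch (n + 1) (Fin.snoc s false)
      obtain ⟨y₁, hy₁P, hy₁⟩ := hbranch (n + 1) (Fin.snoc s true)
      have hchild : ∀ b : Bool, Icc (F (n + 1) (Fin.snoc s b)).1 (F (n + 1) (Fin.snoc s b)).2 ⊆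
          Icc (F n s).1 (F n s).2 := by
        intro b
        have h := hnest n (Fin.snoc s b)
        rwa [Fin.init_snoc] at h
      have hne01 : y₀ ≠ y₁ := by
        intro h
        have hd := (hgood (n + 1)).2.2 (Fin.snoc s false) (Fin.snoc s true) (by
          intro hc
          have := congrFun hc (Fin.last n)
          rw [Fin.snoc_last, Fin.snoc_last] at this
          exact Bool.false_ne_true this)
        have : y₀ ∈ (∅ : Set ℝ) := hd ▸ ⟨hy₀, h ▸ hy₁⟩
        exact this
      have hclose : ∀ y ∈ Icc (F n s).1 (F n s).2, y ∈ Metric.ball x ε := by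
        intro y hy
        have hlen := (hgood n).2.1 s
        obtain ⟨h1, h2⟩ := hy
        obtain ⟨h3, h4⟩ := hs
        rw [Metric.mem_ball, Real.dist_eq, abs_lt]
        constructor <;> linarith
      rcases ne_or_eq y₀ x with hne | heq
      · exact ⟨y₀, ⟨hball (hclose y₀ (hchild false hy₀)), hy₀P⟩, hne⟩
      · refine ⟨y₁, ⟨hball (hclose y₁ (hchild true hy₁)), hy₁P⟩, ?_⟩
        rw [← heq]
        exact fun h => hne01 (h ▸ rfl)
  -- the comeager set B
  set W : ℕ → Set ℝ := fun k => ⋃ (n : ℕ) (_ : (Nat.unpair n).1 = k), Ioo (cd n).1 (cd n).2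
    with hW
  have hWopen : ∀ k, IsOpen (W k) := fun k => isOpen_iUnion fun n => isOpen_iUnion fun _ => isOpen_Ioo
  have hWdense : ∀ k, Dense (W k) := by
    intro k
    rw [dense_iff_inter_open]
    intro U hUo hUne
    obtain ⟨m, hm⟩ := exists_ratIoo hUo hUne
    set n := Nat.pair k m with hn
    have hun : (Nat.unpair n).1 = k ∧ (Nat.unpair n).2 = m := by
      rw [hn, Nat.unpair_pair]
      exact ⟨rfl, rfl⟩
    obtain ⟨x, hx⟩ := nonempty_Ioo.mpr (hcdlt n)
    refine ⟨x, ?_, ?_⟩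
    · apply hm
      have := hcdsub n
      rw [hun.2] at this
      exact this hx
    · exact mem_iUnion.mpr ⟨n, mem_iUnion.mpr ⟨hun.1, hx⟩⟩
  set B : Set ℝ := ⋂ k, W k with hB
  have hBres : B ∈ residual ℝ :=
    countable_iInter_mem.mpr fun k => residual_of_dense_open (hWopen k) (hWdense k)
  have hBc : IsMeagre Bᶜ := by
    rw [IsMeagre, compl_compl]
    exact hBres
  refine ⟨B, P, hBc, hPne, hPperfect, ?_⟩
  rintro ⟨x, y⟩ ⟨hxB, hyP⟩
  apply hDsub
  refine mem_iInter.mpr fun k => ?_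
  have hxW : x ∈ W k := mem_iInter.mp hxB k
  obtain ⟨n, hn⟩ := mem_iUnion.mp hxW
  obtain ⟨hnk, hxIoo⟩ := mem_iUnion.mp hn
  obtain ⟨t, ht⟩ := mem_iUnion.mp (mem_iInter.mp hyP (n + 1))
  have := hprod n t (Set.mk_mem_prod hxIoo ht)
  rwa [hnk] at this


end EgglestonAux

/-- **Eggleston-type theorem, category case.** If `G ⊆ ℝ × ℝ` is a Borel set whose complement
lies in `ℳ ⊗ ℳ`, then there are a set `B` with meager complement and a perfect set `P`
(nonempty, closed, without isolated points) with `B × P ⊆ G`. -/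
theorem eggleston_category (G : Set (ℝ × ℝ)) (hG : MeasurableSet G)
    (hGc : MemMeagerFubiniProd Gᶜ) :
    ∃ B P : Set ℝ, IsMeagre Bᶜ ∧ P.Nonempty ∧ Perfect P ∧ B ×ˢ P ⊆ G := by
  exact eggleston_category' G hG hGc
end

section
/- Let 𝒩 denote the σ-ideal of Lebesgue null subsets of ℝ, and let G ⊆ ℝ × ℝ be a Borel set whose complement belongs to the Fubini product 𝒩 ⊗ 𝒩. Then there exist a set B ⊆ ℝ whose complement is Lebesgue null and a perfect set P ⊆ ℝ such that B × P ⊆ G. -/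
open Set MeasureTheory
open scoped ENNReal

private noncomputable def egR (m : ℕ → ℝ) : ℕ → ℝ
  | 0 => min 1 (m 0 / 2)
  | J + 1 => min (egR m J / 4) (m (J + 1) / 2)

private lemma egR_pos (m : ℕ → ℝ) (hm : ∀ J, 0 < m J) : ∀ J, 0 < egR m J := by
  intro J
  induction J with
  | zero => exact lt_min one_pos (by linarith [hm 0])
  | succ J ih => exact lt_min (by linarith) (by linarith [hm (J+1)])

private lemma egR_le_half (m : ℕ → ℝ) : ∀ J, egR m J ≤ m J / 2 := by
  intro J; cases J with
  | zero => exact min_le_right _ _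
  | succ J => exact min_le_right _ _

private lemma egR_succ_le (m : ℕ → ℝ) (J : ℕ) : egR m (J+1) ≤ egR m J / 4 :=
  min_le_left _ _

section seq

variable {r : ℕ → ℝ}

private lemma egr_geom (hpos : ∀ j, 0 < r j) (h4 : ∀ j, r (j+1) ≤ r j / 4) :
    ∀ n i, r (i + n) ≤ r n * (4⁻¹ : ℝ) ^ i := by
  intro n i
  induction i with
  | zero => simp
  | succ i ih =>
      have h1 : r (i + 1 + n) = r ((i + n) + 1) := by ring_nf
      rw [h1]
      calc r ((i+n)+1) ≤ r (i+n) / 4 := h4 _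
        _ ≤ (r n * (4⁻¹:ℝ)^i) / 4 := by linarith
        _ = r n * (4⁻¹:ℝ)^(i+1) := by ring

private lemma egr_summable (hpos : ∀ j, 0 < r j) (h4 : ∀ j, r (j+1) ≤ r j / 4) :
    Summable r := by
  have hg : Summable (fun i : ℕ => r 0 * (4⁻¹:ℝ)^i) :=
    (summable_geometric_of_lt_one (r := (4⁻¹:ℝ)) (by norm_num) (by norm_num)).mul_left (r 0)
  refine Summable.of_nonneg_of_le (fun j => (hpos j).le) (fun j => ?_) hg
  simpa using egr_geom hpos h4 0 j

private lemma egw_summable (hpos : ∀ j, 0 < r j) (h4 : ∀ j, r (j+1) ≤ r j / 4) (b : ℕ → Bool) :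
    Summable (fun j => if b j then r j else 0) := by
  refine Summable.of_nonneg_of_le (fun j => ?_) (fun j => ?_) (egr_summable hpos h4)
  · split <;> simp [le_of_lt (hpos j)]
  · split
    · exact le_rfl
    · exact (hpos j).le

private lemma egw_tail (hpos : ∀ j, 0 < r j) (h4 : ∀ j, r (j+1) ≤ r j / 4) (b : ℕ → Bool) (n : ℕ) :
    ∑' i, (if b (i+n) then r (i+n) else 0) ≤ 2 * r n := by
  have hs1 : Summable (fun i => r (i + n)) := (summable_nat_add_iff n).2 (egr_summable hpos h4)
  have hs2 : Summable (fun i : ℕ => r n * (4⁻¹:ℝ)^i) :=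
    (summable_geometric_of_lt_one (r := (4⁻¹:ℝ)) (by norm_num) (by norm_num)).mul_left (r n)
  have h1 : ∑' i, (if b (i+n) then r (i+n) else 0) ≤ ∑' i, r (i+n) := by
    refine Summable.tsum_le_tsum (fun i => ?_) ?_ hs1
    · split
      · exact le_rfl
      · exact (hpos _).le
    · exact (summable_nat_add_iff (f := fun j => if b j then r j else 0) n).2
        (egw_summable hpos h4 b)
  have h2 : ∑' i, r (i+n) ≤ ∑' i, r n * (4⁻¹:ℝ)^i :=
    Summable.tsum_le_tsum (fun i => egr_geom hpos h4 n i) hs1 hs2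
  have h3 : ∑' i : ℕ, r n * (4⁻¹:ℝ)^i = r n * (1 - 4⁻¹)⁻¹ := by
    rw [tsum_mul_left, tsum_geometric_of_lt_one (r := (4⁻¹:ℝ)) (by norm_num) (by norm_num)]
  have h4' : r n * ((1:ℝ) - 4⁻¹)⁻¹ ≤ 2 * r n := by
    have := (hpos n).le
    rw [show ((1:ℝ) - 4⁻¹)⁻¹ = 4/3 by norm_num]
    linarith
  linarith

private lemma egr_small (hpos : ∀ j, 0 < r j) (h4 : ∀ j, r (j+1) ≤ r j / 4)
    {ε : ℝ} (hε : 0 < ε) : ∃ n, 2 * r n < ε := by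
  have h0 := hpos 0
  obtain ⟨n, hn⟩ := exists_pow_lt_of_lt_one (x := ε / (2 * r 0)) (y := (4⁻¹:ℝ))
    (by positivity) (by norm_num)
  refine ⟨n, ?_⟩
  have h1 : r n ≤ r 0 * (4⁻¹:ℝ)^n := by simpa using egr_geom hpos h4 0 n
  have h2 : (4⁻¹:ℝ)^n < ε / (2 * r 0) := hn
  calc 2 * r n ≤ 2 * (r 0 * (4⁻¹:ℝ)^n) := by linarith
    _ < 2 * (r 0 * (ε / (2 * r 0))) := by
        have : (0:ℝ) < r 0 := h0
        gcongr
    _ = ε := by field_simp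
end seq

private noncomputable def egF (r : ℕ → ℝ) (b : ℕ → Bool) : ℝ := ∑' j, if b j then r j else 0

section egFsec

variable {r : ℕ → ℝ}

private lemma egF_partial (hpos : ∀ j, 0 < r j) (h4 : ∀ j, r (j+1) ≤ r j / 4)
    (b : ℕ → Bool) (n : ℕ) :
    |egF r b - ∑ j ∈ Finset.range n, (if b j then r j else 0)| ≤ 2 * r n := by
  have hsum := egw_summable hpos h4 b
  have hkey := Summable.sum_add_tsum_nat_add (f := fun j => if b j then r j else 0) n hsum
  have h1 : egF r b - ∑ j ∈ Finset.range n, (if b j then r j else 0)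
      = ∑' i, (if b (i+n) then r (i+n) else 0) := by
    rw [egF, ← hkey]; ring
  rw [h1]
  have hnn : (0:ℝ) ≤ ∑' i, (if b (i+n) then r (i+n) else 0) := by
    refine tsum_nonneg (fun i => ?_)
    split
    · exact (hpos _).le
    · exact le_rfl
  rw [abs_of_nonneg hnn]
  exact egw_tail hpos h4 b n

private lemma egF_flip (hpos : ∀ j, 0 < r j) (h4 : ∀ j, r (j+1) ≤ r j / 4)
    (b : ℕ → Bool) (m : ℕ) :
    |egF r (Function.update b m (!(b m))) - egF r b| = r m := by
  classical
  set b' := Function.update b m (!(b m)) with hb'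
  have hsub : egF r b' - egF r b
      = ∑' j, ((if b' j then r j else 0) - (if b j then r j else 0)) := by
    rw [egF, egF, ← Summable.tsum_sub (egw_summable hpos h4 b') (egw_summable hpos h4 b)]
  have hsingle : ∑' j, ((if b' j then r j else 0) - (if b j then r j else 0))
      = (if b' m then r m else 0) - (if b m then r m else 0) := by
    refine tsum_eq_single m (fun j hj => ?_)
    have : b' j = b j := Function.update_of_ne hj _ b
    rw [this]; ring
  have hbm : b' m = !(b m) := Function.update_self m _ b
  rw [hsub, hsingle, hbm]
  cases hb : b m <;> simp [abs_of_nonneg (hpos m).le, abs_of_nonpos, (hpos m).le]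

private lemma egF_continuous (hpos : ∀ j, 0 < r j) (h4 : ∀ j, r (j+1) ≤ r j / 4) :
    Continuous (egF r) := by
  refine continuous_tsum (u := r) (fun j => ?_) (egr_summable hpos h4) (fun j b => ?_)
  · exact (continuous_of_discreteTopology (α := Bool)
      (f := fun v : Bool => if v then r j else 0)).comp (continuous_apply j)
  · rw [Real.norm_eq_abs]
    split
    · rw [abs_of_nonneg (hpos j).le]
    · simpa using (hpos j).le

private lemma egF_perfect (hpos : ∀ j, 0 < r j) (h4 : ∀ j, r (j+1) ≤ r j / 4) (c : ℝ) :
    Perfect (range fun b : ℕ → Bool => c + egF r b) ∧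
      (range fun b : ℕ → Bool => c + egF r b).Nonempty := by
  classical
  have hcont : Continuous (fun b : ℕ → Bool => c + egF r b) :=
    continuous_const.add (egF_continuous hpos h4)
  refine ⟨⟨(isCompact_range hcont).isClosed, ?_⟩, ⟨c + egF r (fun _ => false), mem_range_self _⟩⟩
  rintro y ⟨b, rfl⟩
  rw [accPt_iff_nhds]
  intro V hV
  obtain ⟨ε, hε, hball⟩ := Metric.mem_nhds_iff.1 hV
  obtain ⟨n, hn⟩ := egr_small hpos h4 hε
  refine ⟨c + egF r (Function.update b n (!(b n))), ⟨?_, mem_range_self _⟩, ?_⟩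
  · apply hball
    rw [Metric.mem_ball, Real.dist_eq]
    have h1 : c + egF r (Function.update b n (!(b n))) - (c + egF r b)
        = egF r (Function.update b n (!(b n))) - egF r b := by ring
    rw [h1, egF_flip hpos h4 b n]
    linarith [hpos n]
  · intro hcontra
    have h2 : egF r (Function.update b n (!(b n))) - egF r b = 0 := by
      have := congrArg (fun t => t - (c + egF r b)) hcontra
      simpa using this
    have h3 := egF_flip hpos h4 b n
    rw [h2] at h3
    simp at h3
    exact absurd h3 (ne_of_lt (hpos n))

end egFsec


/-- A set belongs to the Fubini product `𝒩 ⊗ 𝒩` of the Lebesgue-null ideal with itself iff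
it is covered by a Borel set almost all of whose vertical sections are Lebesgue null. -/
def MemNullFubiniProd (A : Set (ℝ × ℝ)) : Prop :=
  ∃ B : Set (ℝ × ℝ), MeasurableSet B ∧ A ⊆ B ∧
    volume {x : ℝ | ¬ volume {y : ℝ | (x, y) ∈ B} = 0} = 0

/-- **Eggleston-type theorem, measure case.** If `G ⊆ ℝ × ℝ` is a Borel set whose complement
lies in `𝒩 ⊗ 𝒩`, then there are a set `B` with Lebesgue-null complement and a perfect set
`P` (nonempty, closed, without isolated points) with `B × P ⊆ G`. -/
theorem eggleston_measure (G : Set (ℝ × ℝ)) (hG : MeasurableSet G)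
    (hGc : MemNullFubiniProd Gᶜ) :
    ∃ B P : Set ℝ, volume Bᶜ = 0 ∧ P.Nonempty ∧ Perfect P ∧ B ×ˢ P ⊆ G := by
  classical
  obtain ⟨N, hNmeas, hGN, hNsec⟩ := hGc
  -- Step 1 : N is null in the plane
  have hsec' : (fun x => volume (Prod.mk x ⁻¹' N)) =ᵐ[(volume : Measure ℝ)] 0 := by
    rw [Filter.EventuallyEq, ae_iff]
    exact hNsec
  have hN0 : volume N = 0 := by
    rw [Measure.volume_eq_prod ℝ ℝ]
    exact (Measure.measure_prod_null hNmeas).2 hsec'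
  -- Step 2 : open covers
  have hUx : ∀ k : ℕ, ∃ U ⊇ N, IsOpen U ∧ volume U < (2⁻¹:ℝ≥0∞)^(3*k) := by
    intro k
    refine Set.exists_isOpen_lt_of_lt N _ ?_
    rw [hN0]
    exact ENNReal.pow_pos (ENNReal.inv_pos.2 ENNReal.ofNat_ne_top) _
  choose U hUN hUopen hUlt using hUx
  have hUne : ∀ k, volume (U k) ≠ ⊤ := fun k => ne_top_of_lt (hUlt k)
  -- Step 3 : inner compacts
  have hCx : ∀ k J : ℕ, ∃ K ⊆ U k, IsCompact K ∧
      volume (U k \ K) ≤ (2⁻¹:ℝ≥0∞)^(3*k) * (2⁻¹)^(3*J) := by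
    intro k J
    have hne : ((2⁻¹:ℝ≥0∞)^(3*k) * (2⁻¹)^(3*J)) ≠ 0 :=
      mul_ne_zero (pow_ne_zero _ (ENNReal.inv_ne_zero.2 ENNReal.ofNat_ne_top))
        (pow_ne_zero _ (ENNReal.inv_ne_zero.2 ENNReal.ofNat_ne_top))
    obtain ⟨K, hKsub, hKcomp, hKlt⟩ :=
      (hUopen k).measurableSet.exists_isCompact_lt_add (hUne k) hne
    refine ⟨K, hKsub, hKcomp, ?_⟩
    rw [measure_diff hKsub hKcomp.isClosed.measurableSet.nullMeasurableSet
      (ne_top_of_le_ne_top (hUne k) (measure_mono hKsub))]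
    exact tsub_le_iff_right.2 (by rw [add_comm]; exact hKlt.le)
  choose C hCsub hCcomp hCle using hCx
  -- Step 4 : thickening distances
  have hdx : ∀ k J : ℕ, ∃ d : ℝ, 0 < d ∧ Metric.thickening d (C k J) ⊆ U k := fun k J =>
    (hCcomp k J).exists_thickening_subset_open (hUopen k) (hCsub k J)
  choose δ hδpos hδsub using hdx
  -- Step 5 : the scale sequence r
  set m : ℕ → ℝ := fun J => (Finset.range (J+1)).inf'
    (Finset.nonempty_range_iff.2 (Nat.succ_ne_zero J)) (fun k => δ k J) with hm
  have hmpos : ∀ J, 0 < m J := by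
    intro J
    rw [hm, Finset.lt_inf'_iff]
    exact fun k _ => hδpos k J
  set r : ℕ → ℝ := egR m with hrdef
  have hrpos : ∀ j, 0 < r j := egR_pos m hmpos
  have hr4 : ∀ j, r (j+1) ≤ r j / 4 := fun j => egR_succ_le m j
  have hrlt : ∀ k J, k ≤ J → r J < δ k J := by
    intro k J hkJ
    have h1 : r J ≤ m J / 2 := egR_le_half m J
    have h2 : m J ≤ δ k J := by
      rw [hm]
      exact Finset.inf'_le _ (Finset.mem_range.2 (Nat.lt_succ_of_le hkJ))
    have := hmpos J
    linarith
  -- Step 6 : the saturation sets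
  set u : Finset ℕ → ℝ := fun F => ∑ j ∈ F, r j with hu
  set ψ : ℝ → ℝ × ℝ → ℝ × ℝ := fun t p => (p.1, p.2 + t) with hψ
  have hψcont : ∀ t, Continuous (ψ t) := fun t =>
    continuous_fst.prodMk (continuous_snd.add continuous_const)
  have hψmp : ∀ (t : ℝ) (s : Set (ℝ × ℝ)), MeasurableSet s → volume (ψ t ⁻¹' s) = volume s := by
    intro t s hs
    have h2 : MeasurePreserving (Prod.map (id : ℝ → ℝ) (fun x : ℝ => x + t))
        ((volume : Measure ℝ).prod volume) ((volume : Measure ℝ).prod volume) :=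
      (MeasurePreserving.id volume).prod (measurePreserving_add_right volume t)
    have h3 : ψ t = Prod.map (id : ℝ → ℝ) (fun x : ℝ => x + t) := by
      funext p; rfl
    have h4 : MeasurePreserving (ψ t) (volume : Measure (ℝ × ℝ)) volume := by
      rw [Measure.volume_eq_prod ℝ ℝ, h3]; exact h2
    exact h4.measure_preimage hs.nullMeasurableSet
  set S : ℕ → Set (ℝ × ℝ) := fun k => ⋃ F : Finset ℕ, ψ (u F) ⁻¹' (U k) with hS
  set Z : Set (ℝ × ℝ) := ⋂ k, S k with hZ
  have hSmeas : ∀ k, MeasurableSet (S k) :=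
    fun k => MeasurableSet.iUnion (fun F => ((hUopen k).preimage (hψcont _)).measurableSet)
  have hZmeas : MeasurableSet Z := MeasurableSet.iInter hSmeas
  -- Step 7 : the key inclusion
  have hincl : ∀ (k : ℕ) (F : Finset ℕ), ψ (u F) ⁻¹' (U k) ⊆
      (⋃ F' ∈ (Finset.range k).powerset, ψ (u F') ⁻¹' (U k)) ∪
      (⋃ J : ℕ, ⋃ F' ∈ (Finset.range J).powerset,
        ψ (u (insert J F')) ⁻¹' (U k \ C k J)) := by
    intro k F
    induction F using Finset.strongInductionOn with
    | _ F ih =>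
      by_cases hFsub : F ⊆ Finset.range k
      · intro p hp
        exact Or.inl (Set.mem_biUnion (Finset.mem_powerset.2 hFsub) hp)
      · obtain ⟨j0, hj0F, hj0k⟩ := Finset.not_subset.1 hFsub
        have hFne : F.Nonempty := ⟨j0, hj0F⟩
        have hJF : F.max' hFne ∈ F := F.max'_mem hFne
        set J := F.max' hFne with hJdef
        have hkJ : k ≤ J := by
          have h1 := F.le_max' j0 hj0F
          have h2 : ¬ j0 < k := by simpa [Finset.mem_range] using hj0k
          omega
        intro p hp
        by_cases hq : ψ (u F) p ∈ C k J
        · have hsum : u (F.erase J) + r J = u F := by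
            rw [hu]; exact Finset.sum_erase_add F r hJF
          have hpmem : p ∈ ψ (u (F.erase J)) ⁻¹' (U k) := by
            show ψ (u (F.erase J)) p ∈ U k
            apply hδsub k J
            rw [Metric.mem_thickening_iff]
            refine ⟨ψ (u F) p, hq, ?_⟩
            have hd2 : dist (p.2 + u (F.erase J)) (p.2 + u F) = r J := by
              rw [← hsum, Real.dist_eq]
              have he : p.2 + u (F.erase J) - (p.2 + (u (F.erase J) + r J)) = -(r J) := by ring
              rw [he, abs_neg, abs_of_pos (hrpos J)]
            calc dist (ψ (u (F.erase J)) p) (ψ (u F) p)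
                = max (dist p.1 p.1) (dist (p.2 + u (F.erase J)) (p.2 + u F)) := by
                  rw [Prod.dist_eq]
              _ = r J := by rw [dist_self, hd2]; exact max_eq_right (hrpos J).le
              _ < δ k J := hrlt k J hkJ
          exact ih (F.erase J) (Finset.erase_ssubset hJF) hpmem
        · refine Or.inr (Set.mem_iUnion.2 ⟨J, ?_⟩)
          have hEsub : F.erase J ∈ (Finset.range J).powerset := by
            rw [Finset.mem_powerset]
            intro x hx
            rw [Finset.mem_range]
            exact lt_of_le_of_ne (F.le_max' x (Finset.mem_of_mem_erase hx))
              (Finset.ne_of_mem_erase hx)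
          refine Set.mem_biUnion hEsub ?_
          show ψ (u (insert J (F.erase J))) p ∈ U k \ C k J
          rw [Finset.insert_erase hJF]
          exact ⟨hp, hq⟩
  -- Step 8 : measure bound for S k
  have hhalf : ∀ n : ℕ, ((2:ℝ≥0∞)⁻¹)^n ≤ 1 :=
    fun n => pow_le_one' (ENNReal.inv_le_one.2 one_le_two) n
  have hcancel : (2:ℝ≥0∞) * 2⁻¹ = 1 :=
    ENNReal.mul_inv_cancel (by norm_num) ENNReal.ofNat_ne_top
  have hSle : ∀ k, volume (S k) ≤ 3 * (2⁻¹:ℝ≥0∞)^k := by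
    intro k
    have hsub : S k ⊆ (⋃ F' ∈ (Finset.range k).powerset, ψ (u F') ⁻¹' (U k)) ∪
        (⋃ J : ℕ, ⋃ F' ∈ (Finset.range J).powerset,
          ψ (u (insert J F')) ⁻¹' (U k \ C k J)) := by
      rw [hS]
      exact Set.iUnion_subset (fun F => hincl k F)
    have hA : volume (⋃ F' ∈ (Finset.range k).powerset, ψ (u F') ⁻¹' (U k))
        ≤ (2⁻¹:ℝ≥0∞)^k := by
      refine le_trans (measure_biUnion_finset_le _ _) ?_
      have h1 : ∀ F' ∈ (Finset.range k).powerset,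
          volume (ψ (u F') ⁻¹' (U k)) ≤ (2⁻¹:ℝ≥0∞)^(3*k) := by
        intro F' _
        rw [hψmp _ _ (hUopen k).measurableSet]
        exact (hUlt k).le
      calc ∑ F' ∈ (Finset.range k).powerset, volume (ψ (u F') ⁻¹' (U k))
          ≤ ∑ _F' ∈ (Finset.range k).powerset, (2⁻¹:ℝ≥0∞)^(3*k) := Finset.sum_le_sum h1
        _ = ((Finset.range k).powerset.card : ℝ≥0∞) * (2⁻¹:ℝ≥0∞)^(3*k) := by
            rw [Finset.sum_const, nsmul_eq_mul]
        _ = (2:ℝ≥0∞)^k * (2⁻¹:ℝ≥0∞)^(3*k) := by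
            rw [Finset.card_powerset, Finset.card_range]
            push_cast
            ring
        _ ≤ (2⁻¹:ℝ≥0∞)^k := by
            have h3 : (2⁻¹:ℝ≥0∞)^(3*k) = (2⁻¹)^k * ((2⁻¹)^k * (2⁻¹)^k) := by
              rw [show 3*k = k + (k + k) by ring, pow_add, pow_add]
            rw [h3, ← mul_assoc, ← mul_pow, hcancel, one_pow, one_mul]
            calc (2⁻¹:ℝ≥0∞)^k * (2⁻¹)^k ≤ (2⁻¹:ℝ≥0∞)^k * 1 :=
                  mul_le_mul_right (hhalf k) _
              _ = (2⁻¹:ℝ≥0∞)^k := mul_one _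
    have hD : volume (⋃ J : ℕ, ⋃ F' ∈ (Finset.range J).powerset,
        ψ (u (insert J F')) ⁻¹' (U k \ C k J)) ≤ 2 * (2⁻¹:ℝ≥0∞)^(3*k) := by
      refine le_trans (measure_iUnion_le _) ?_
      have hJ : ∀ J : ℕ, volume (⋃ F' ∈ (Finset.range J).powerset,
          ψ (u (insert J F')) ⁻¹' (U k \ C k J)) ≤ (2⁻¹:ℝ≥0∞)^(3*k) * (2⁻¹)^J := by
        intro J
        refine le_trans (measure_biUnion_finset_le _ _) ?_
        have h1 : ∀ F' ∈ (Finset.range J).powerset,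
            volume (ψ (u (insert J F')) ⁻¹' (U k \ C k J))
              ≤ (2⁻¹:ℝ≥0∞)^(3*k) * (2⁻¹)^(3*J) := by
          intro F' _
          rw [hψmp _ _ ((hUopen k).measurableSet.diff
            (hCcomp k J).isClosed.measurableSet)]
          exact hCle k J
        calc ∑ F' ∈ (Finset.range J).powerset,
              volume (ψ (u (insert J F')) ⁻¹' (U k \ C k J))
            ≤ ∑ _F' ∈ (Finset.range J).powerset, (2⁻¹:ℝ≥0∞)^(3*k) * (2⁻¹)^(3*J) :=
              Finset.sum_le_sum h1
          _ = ((Finset.range J).powerset.card : ℝ≥0∞)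
                * ((2⁻¹:ℝ≥0∞)^(3*k) * (2⁻¹)^(3*J)) := by
              rw [Finset.sum_const, nsmul_eq_mul]
          _ = (2⁻¹:ℝ≥0∞)^(3*k) * ((2:ℝ≥0∞)^J * (2⁻¹:ℝ≥0∞)^(3*J)) := by
              rw [Finset.card_powerset, Finset.card_range]
              push_cast
              ring
          _ ≤ (2⁻¹:ℝ≥0∞)^(3*k) * (2⁻¹)^J := by
              refine mul_le_mul_right ?_ _
              have h3 : (2⁻¹:ℝ≥0∞)^(3*J) = (2⁻¹)^J * ((2⁻¹)^J * (2⁻¹)^J) := by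
                rw [show 3*J = J + (J + J) by ring, pow_add, pow_add]
              rw [h3, ← mul_assoc, ← mul_pow, hcancel, one_pow, one_mul]
              calc (2⁻¹:ℝ≥0∞)^J * (2⁻¹)^J ≤ (2⁻¹:ℝ≥0∞)^J * 1 :=
                    mul_le_mul_right (hhalf J) _
                _ = (2⁻¹:ℝ≥0∞)^J := mul_one _
      calc ∑' J : ℕ, volume (⋃ F' ∈ (Finset.range J).powerset,
              ψ (u (insert J F')) ⁻¹' (U k \ C k J))
          ≤ ∑' J : ℕ, (2⁻¹:ℝ≥0∞)^(3*k) * (2⁻¹)^J := ENNReal.tsum_le_tsum hJ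
        _ = (2⁻¹:ℝ≥0∞)^(3*k) * ∑' J : ℕ, (2⁻¹:ℝ≥0∞)^J := ENNReal.tsum_mul_left
        _ = (2⁻¹:ℝ≥0∞)^(3*k) * 2 := by
            rw [ENNReal.tsum_geometric, ENNReal.one_sub_inv_two, inv_inv]
        _ = 2 * (2⁻¹:ℝ≥0∞)^(3*k) := mul_comm _ _
    calc volume (S k) ≤ volume ((⋃ F' ∈ (Finset.range k).powerset, ψ (u F') ⁻¹' (U k)) ∪
        (⋃ J : ℕ, ⋃ F' ∈ (Finset.range J).powerset,
          ψ (u (insert J F')) ⁻¹' (U k \ C k J))) := measure_mono hsub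
      _ ≤ volume (⋃ F' ∈ (Finset.range k).powerset, ψ (u F') ⁻¹' (U k))
          + volume (⋃ J : ℕ, ⋃ F' ∈ (Finset.range J).powerset,
            ψ (u (insert J F')) ⁻¹' (U k \ C k J)) := measure_union_le _ _
      _ ≤ (2⁻¹:ℝ≥0∞)^k + 2 * (2⁻¹:ℝ≥0∞)^(3*k) := add_le_add hA hD
      _ ≤ (2⁻¹:ℝ≥0∞)^k + 2 * (2⁻¹:ℝ≥0∞)^k := by
          refine add_le_add le_rfl (mul_le_mul_right ?_ _)
          rw [show 3*k = k + 2*k by ring, pow_add]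
          calc (2⁻¹:ℝ≥0∞)^k * (2⁻¹)^(2*k) ≤ (2⁻¹:ℝ≥0∞)^k * 1 :=
                mul_le_mul_right (hhalf (2*k)) _
            _ = (2⁻¹:ℝ≥0∞)^k := mul_one _
      _ = 3 * (2⁻¹:ℝ≥0∞)^k := by ring
  -- Step 9 : Z is null
  have hZle : ∀ k, volume Z ≤ 3 * (2⁻¹:ℝ≥0∞)^k := by
    intro k
    refine le_trans (measure_mono ?_) (hSle k)
    rw [hZ]
    exact Set.iInter_subset _ k
  have hZ0 : volume Z = 0 := by
    have htend : Filter.Tendsto (fun k : ℕ => 3 * (2⁻¹:ℝ≥0∞)^k) Filter.atTop (nhds 0) := by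
      have h1 := ENNReal.tendsto_pow_atTop_nhds_zero_of_lt_one
        (by norm_num : (2⁻¹:ℝ≥0∞) < 1)
      have h2 := ENNReal.Tendsto.const_mul (a := (3:ℝ≥0∞)) h1
        (Or.inr (by norm_num))
      simpa using h2
    have hle0 : volume Z ≤ 0 := ge_of_tendsto' htend hZle
    exact le_antisymm hle0 (zero_le)
  -- Step 10 : choose the translation parameter
  have hZswap : NullMeasurableSet Z ((volume : Measure ℝ).prod volume) := by
    rw [← Measure.volume_eq_prod ℝ ℝ]
    exact hZmeas.nullMeasurableSet
  have h1 : ((volume : Measure ℝ).prod volume) (Prod.swap ⁻¹' Z : Set (ℝ × ℝ)) = 0 := by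
    have hmp := Measure.measurePreserving_swap (μ := (volume : Measure ℝ))
      (ν := (volume : Measure ℝ))
    rw [hmp.measure_preimage hZswap, ← Measure.volume_eq_prod ℝ ℝ]
    exact hZ0
  have hae : ∀ᵐ c : ℝ, volume {x : ℝ | (x, c) ∈ Z} = 0 := by
    have h2 := (Measure.measure_prod_null (μ := (volume : Measure ℝ))
      (ν := (volume : Measure ℝ)) (hZmeas.preimage measurable_swap)).1 h1
    filter_upwards [h2] with c hc
    exact hc
  obtain ⟨c₀, hc₀⟩ := hae.exists
  -- Step 11 : conclusion
  refine ⟨{x : ℝ | (x, c₀) ∈ Z}ᶜ, Set.range (fun b : ℕ → Bool => c₀ + egF r b),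
    ?_, ?_, ?_, ?_⟩
  · rw [compl_compl]; exact hc₀
  · exact (egF_perfect hrpos hr4 c₀).2
  · exact (egF_perfect hrpos hr4 c₀).1
  · rintro ⟨x, y⟩ ⟨hx, hy⟩
    obtain ⟨b, hb'⟩ := hy
    have hb : c₀ + egF r b = y := hb'
    by_contra hg
    have hNxy : (x, y) ∈ N := hGN hg
    have hZx : (x, c₀) ∈ Z := by
      rw [hZ, Set.mem_iInter]
      intro k
      obtain ⟨ε, hεpos, hball⟩ := Metric.isOpen_iff.1 (hUopen k) (x, y) (hUN k hNxy)
      obtain ⟨n, hn⟩ := egr_small hrpos hr4 hεpos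
      have hsum : u ((Finset.range n).filter (fun j => b j = true))
          = ∑ j ∈ Finset.range n, (if b j then r j else 0) := by
        rw [hu]
        exact Finset.sum_filter (fun j => b j = true) r
      have hdist : dist (ψ (u ((Finset.range n).filter (fun j => b j = true))) (x, c₀))
          (x, y) < ε := by
        have hd2 : dist (c₀ + u ((Finset.range n).filter (fun j => b j = true))) y < ε := by
          rw [← hb, Real.dist_eq]
          have he : c₀ + u ((Finset.range n).filter (fun j => b j = true))
              - (c₀ + egF r b)
              = -(egF r b - ∑ j ∈ Finset.range n, (if b j then r j else 0)) := by
            rw [hsum]; ring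
          rw [he, abs_neg]
          calc |egF r b - ∑ j ∈ Finset.range n, (if b j then r j else 0)|
              ≤ 2 * r n := egF_partial hrpos hr4 b n
            _ < ε := hn
        calc dist (ψ (u ((Finset.range n).filter (fun j => b j = true))) (x, c₀)) (x, y)
            = max (dist x x)
              (dist (c₀ + u ((Finset.range n).filter (fun j => b j = true))) y) := by
              rw [Prod.dist_eq]
          _ = dist (c₀ + u ((Finset.range n).filter (fun j => b j = true))) y := by
              rw [dist_self]; exact max_eq_right dist_nonneg
          _ < ε := hd2
      have hmem : ψ (u ((Finset.range n).filter (fun j => b j = true))) (x, c₀) ∈ U k :=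
        hball (Metric.mem_ball.2 hdist)
      rw [hS]
      exact Set.mem_iUnion.2 ⟨(Finset.range n).filter (fun j => b j = true), hmem⟩
    exact hx hZx
end
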